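/- Let Φ = {φ_i}_{i∈I_m} be a frame for a finite-dimensional Hilbert space H_n whose frame operator S_Φ is diagonal with respect to a fixed orthonormal basis. Then Φ does weak phase retrieval if and only if its canonical dual {S_Φ^{-1} φ_i} does weak phase retrieval. -/

import Mathlib

/-!
Since `S_Φ` is diagonal, `S_Φ (ψ i) = φ i` says `φ i = D (ψ i)` for the diagonal operator `D`
with entries `d j`, and `D` is invertible because `Φ` spans. Weak phase retrieval is invariant
under invertible diagonal operators: `⟨x, D v⟩ = ⟨D* x, v⟩` with `D*` again diagonal, and
rescaling both vectors coordinatewise by the same nonzero scalars shifts the phases of `x j` and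
`y j` by the same factor, so a common unimodular `α` for one pair works for the other.
-/

variable {𝕜 : Type*} [RCLike 𝕜] {n : ℕ}

/-- The phase of a scalar: `z / |z|`. -/
noncomputable def phase (z : 𝕜) : 𝕜 := z / (‖z‖ : 𝕜)

/-- `x` and `y` weakly have the same phase (coordinates w.r.t. the standard
orthonormal basis of `𝕜^n`). -/
def WeaklySamePhase (x y : EuclideanSpace 𝕜 (Fin n)) : Prop :=
  ∃ α : 𝕜, ‖α‖ = 1 ∧
    ∀ j, x j ≠ 0 → y j ≠ 0 → phase (x j) = α * phase (y j)

/-- The family `φ` does weak phase retrieval. -/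
def DoesWeakPhaseRetrieval {ι : Type*} (φ : ι → EuclideanSpace 𝕜 (Fin n)) : Prop :=
  ∀ x y : EuclideanSpace 𝕜 (Fin n),
    (∀ i, ‖(inner 𝕜 x (φ i) : 𝕜)‖ = ‖(inner 𝕜 y (φ i) : 𝕜)‖) → WeaklySamePhase x y

lemma phase_mul (a b : 𝕜) : phase (a * b) = phase a * phase b := by
  simp only [phase, norm_mul, RCLike.ofReal_mul, mul_div_mul_comm]

lemma phase_ne_zero {a : 𝕜} (h : a ≠ 0) : phase a ≠ 0 :=
  div_ne_zero h (RCLike.ofReal_ne_zero.mpr (norm_ne_zero_iff.mpr h))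

def diagScale (c : Fin n → 𝕜) (x : EuclideanSpace 𝕜 (Fin n)) : EuclideanSpace 𝕜 (Fin n) :=
  WithLp.toLp 2 fun j => c j * x j

@[simp]
lemma diagScale_apply (c : Fin n → 𝕜) (x : EuclideanSpace 𝕜 (Fin n)) (j : Fin n) :
    diagScale c x j = c j * x j :=
  rfl

lemma diagScale_inv_diagScale {c : Fin n → 𝕜} (hc : ∀ j, c j ≠ 0)
    (x : EuclideanSpace 𝕜 (Fin n)) : diagScale c⁻¹ (diagScale c x) = x := by
  ext j
  simp [inv_mul_cancel_left₀ (hc j)]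

lemma inner_diagScale_right (c : Fin n → 𝕜) (x y : EuclideanSpace 𝕜 (Fin n)) :
    inner 𝕜 x (diagScale c y) = inner 𝕜 (diagScale (star c) x) y := by
  simp only [PiLp.inner_apply, diagScale_apply, RCLike.inner_apply, Pi.star_apply,
    RCLike.star_def, map_mul, RCLike.conj_conj]
  exact Finset.sum_congr rfl fun j _ => by ring

lemma WeaklySamePhase.of_diagScale {c : Fin n → 𝕜} (hc : ∀ j, c j ≠ 0)
    {x y : EuclideanSpace 𝕜 (Fin n)} (h : WeaklySamePhase (diagScale c x) (diagScale c y)) :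
    WeaklySamePhase x y := by
  obtain ⟨α, hα, hphase⟩ := h
  refine ⟨α, hα, fun j hx hy => ?_⟩
  have hj := hphase j (mul_ne_zero (hc j) hx) (mul_ne_zero (hc j) hy)
  simp only [diagScale_apply, phase_mul] at hj
  exact mul_left_cancel₀ (phase_ne_zero (hc j)) (by rw [hj]; ring)

lemma DoesWeakPhaseRetrieval.diagScale {ι : Type*} {φ : ι → EuclideanSpace 𝕜 (Fin n)}
    {c : Fin n → 𝕜} (hc : ∀ j, c j ≠ 0) (h : DoesWeakPhaseRetrieval φ) :
    DoesWeakPhaseRetrieval fun i => diagScale c (φ i) := by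
  intro x y hxy
  have hc' : ∀ j, star c j ≠ 0 := fun j => star_ne_zero.mpr (hc j)
  refine WeaklySamePhase.of_diagScale hc' (h _ _ fun i => ?_)
  simpa only [inner_diagScale_right] using hxy i

lemma doesWeakPhaseRetrieval_diagScale_iff {ι : Type*} {φ : ι → EuclideanSpace 𝕜 (Fin n)}
    {c : Fin n → 𝕜} (hc : ∀ j, c j ≠ 0) :
    DoesWeakPhaseRetrieval (fun i => diagScale c (φ i)) ↔ DoesWeakPhaseRetrieval φ := by
  refine ⟨fun h => ?_, DoesWeakPhaseRetrieval.diagScale hc⟩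
  have hc' : ∀ j, c⁻¹ j ≠ 0 := fun j => inv_ne_zero (hc j)
  simpa only [diagScale_inv_diagScale hc] using h.diagScale hc'

lemma exists_apply_ne_zero_of_span_eq_top {ι : Type*} {φ : ι → EuclideanSpace 𝕜 (Fin n)}
    (hspan : Submodule.span 𝕜 (Set.range φ) = ⊤) (j : Fin n) : ∃ i, φ i j ≠ 0 := by
  by_contra! hzero
  have hker : Submodule.span 𝕜 (Set.range φ) ≤
      LinearMap.ker (EuclideanSpace.proj j : EuclideanSpace 𝕜 (Fin n) →L[𝕜] 𝕜).toLinearMap :=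
    Submodule.span_le.mpr <| Set.range_subset_iff.mpr hzero
  rw [hspan] at hker
  simpa using hker (Submodule.mem_top (x := EuclideanSpace.single j (1 : 𝕜)))

/-- if the frame operator `S_φ f = ∑ ⟨f, φ i⟩ φ i` of a frame
`φ` is diagonal w.r.t. the standard orthonormal basis, then `φ` does weak
phase retrieval iff its canonical dual `ψ` (characterized by `S_φ (ψ i) = φ i`)
does weak phase retrieval. -/
theorem weakPhaseRetrieval_canonicalDual {m : ℕ}
    (φ ψ : Fin m → EuclideanSpace 𝕜 (Fin n))
    (hframe : Submodule.span 𝕜 (Set.range φ) = ⊤)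
    (d : Fin n → 𝕜)
    (hdiag : ∀ f : EuclideanSpace 𝕜 (Fin n), ∀ j,
      (∑ i, (inner 𝕜 (φ i) f : 𝕜) • φ i) j = d j * f j)
    (hψ : ∀ i, ∑ j, (inner 𝕜 (φ j) (ψ i) : 𝕜) • φ j = φ i) :
    DoesWeakPhaseRetrieval φ ↔ DoesWeakPhaseRetrieval ψ := by
  have hφ : φ = fun i => diagScale d (ψ i) := by
    ext i j
    rw [diagScale_apply, ← hdiag (ψ i) j, hψ i]
  have hd : ∀ j, d j ≠ 0 := fun j hdj => by
    obtain ⟨i, hi⟩ := exists_apply_ne_zero_of_span_eq_top hframe j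
    exact hi (by rw [hφ, diagScale_apply, hdj, zero_mul])
  rw [hφ]
  exact doesWeakPhaseRetrieval_diagScale_iff hd
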